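/- arXiv:2106.05195 — 4 statements merged into one kernel-verified Lean document; each statement's English description precedes it below -/
import Mathlib

section
/- For a smooth function u : ℝ³ → ℝ, the divergence of the vector field Σ(∇u) = (∂z u ∂x u − (1/2)∂x u (∂y u)² − (1/6)(∂x u)³, −∂z u ∂y u + (1/2)∂y u (∂x u)² + (1/6)(∂y u)³, (1/2)(∂y u)² − (1/2)(∂x u)²) equals (∂z u − (1/2)|∇⊥u|²)(∂x² u − ∂y² u), where ∇⊥u = (∂x u, ∂y u). -/
noncomputable section

/-- Partial derivative in the `x` direction of a function on `ℝ³ = ℝ × ℝ × ℝ`. -/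
def px (u : ℝ × ℝ × ℝ → ℝ) (p : ℝ × ℝ × ℝ) : ℝ := fderiv ℝ u p (1, 0, 0)
/-- Partial derivative in the `y` direction. -/
def py (u : ℝ × ℝ × ℝ → ℝ) (p : ℝ × ℝ × ℝ) : ℝ := fderiv ℝ u p (0, 1, 0)
/-- Partial derivative in the `z` direction. -/
def pz (u : ℝ × ℝ × ℝ → ℝ) (p : ℝ × ℝ × ℝ) : ℝ := fderiv ℝ u p (0, 0, 1)

def Sigma1 (u : ℝ × ℝ × ℝ → ℝ) (p : ℝ × ℝ × ℝ) : ℝ :=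
  pz u p * px u p - (1/2) * px u p * (py u p)^2 - (1/6) * (px u p)^3

def Sigma2 (u : ℝ × ℝ × ℝ → ℝ) (p : ℝ × ℝ × ℝ) : ℝ :=
  -(pz u p * py u p) + (1/2) * py u p * (px u p)^2 + (1/6) * (py u p)^3

def Sigma3 (u : ℝ × ℝ × ℝ → ℝ) (p : ℝ × ℝ × ℝ) : ℝ :=
  (1/2) * (py u p)^2 - (1/2) * (px u p)^2

lemma pd_comm (u : ℝ × ℝ × ℝ → ℝ) (hu : ContDiff ℝ (⊤ : ℕ∞) u) (p v w : ℝ × ℝ × ℝ) :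
    fderiv ℝ (fun q => fderiv ℝ u q v) p w = fderiv ℝ (fun q => fderiv ℝ u q w) p v := by
  have hf : ∀ q, HasFDerivAt u (fderiv ℝ u q) q := fun q =>
    (hu.differentiable (by simp) q).hasFDerivAt
  have hf' : HasFDerivAt (fderiv ℝ u) (fderiv ℝ (fderiv ℝ u) p) p :=
    (((hu.fderiv_right (WithTop.coe_le_coe.mpr le_top)).differentiable one_ne_zero) p).hasFDerivAt
  have hv : HasFDerivAt (fun q => fderiv ℝ u q v)
      (((ContinuousLinearMap.apply ℝ ℝ v)).comp (fderiv ℝ (fderiv ℝ u) p)) p :=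
    (ContinuousLinearMap.apply ℝ ℝ v).hasFDerivAt.comp p hf'
  have hw : HasFDerivAt (fun q => fderiv ℝ u q w)
      (((ContinuousLinearMap.apply ℝ ℝ w)).comp (fderiv ℝ (fderiv ℝ u) p)) p :=
    (ContinuousLinearMap.apply ℝ ℝ w).hasFDerivAt.comp p hf'
  rw [hv.fderiv, hw.fderiv]
  simpa using (second_derivative_symmetric hf hf' v w).symm

/-- div Σ(∇u) = (∂z u − ½|∇⊥u|²)(∂x²u − ∂y²u) for smooth `u`. -/
theorem div_Sigma_eq (u : ℝ × ℝ × ℝ → ℝ) (hu : ContDiff ℝ (⊤ : ℕ∞) u) (p : ℝ × ℝ × ℝ) :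
    px (Sigma1 u) p + py (Sigma2 u) p + pz (Sigma3 u) p =
      (pz u p - (1/2) * ((px u p)^2 + (py u p)^2)) * (px (px u) p - py (py u) p) := by
  have hd : Differentiable ℝ (px u) ∧ Differentiable ℝ (py u) ∧ Differentiable ℝ (pz u) :=
    ⟨((hu.fderiv_right (WithTop.coe_le_coe.mpr le_top)).clm_apply contDiff_const).differentiable one_ne_zero,
     ((hu.fderiv_right (WithTop.coe_le_coe.mpr le_top)).clm_apply contDiff_const).differentiable one_ne_zero,
     ((hu.fderiv_right (WithTop.coe_le_coe.mpr le_top)).clm_apply contDiff_const).differentiable one_ne_zero⟩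
  obtain ⟨hax, hay, haz⟩ := hd
  have Ha : HasFDerivAt (px u) (fderiv ℝ (px u) p) p := (hax p).hasFDerivAt
  have Hb : HasFDerivAt (py u) (fderiv ℝ (py u) p) p := (hay p).hasFDerivAt
  have Hc : HasFDerivAt (pz u) (fderiv ℝ (pz u) p) p := (haz p).hasFDerivAt
  have e1 : Sigma1 u = fun q => pz u q * px u q - (1/2 * px u q) * (py u q * py u q)
      - (1/6) * (px u q * (px u q * px u q)) := by
    funext q; simp only [Sigma1]; ring
  have e2 : Sigma2 u = fun q => -(pz u q * py u q) + (1/2 * py u q) * (px u q * px u q)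
      + (1/6) * (py u q * (py u q * py u q)) := by
    funext q; simp only [Sigma2]; ring
  have e3 : Sigma3 u = fun q => (1/2) * (py u q * py u q) - (1/2) * (px u q * px u q) := by
    funext q; simp only [Sigma3]; ring
  have HS1 := (((Hc.mul Ha).sub ((Ha.const_mul (1/2:ℝ)).mul (Hb.mul Hb))).sub
      ((Ha.mul (Ha.mul Ha)).const_mul (1/6:ℝ)))
  have HS2 := (((Hc.mul Hb).neg.add ((Hb.const_mul (1/2:ℝ)).mul (Ha.mul Ha))).add
      ((Hb.mul (Hb.mul Hb)).const_mul (1/6:ℝ)))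
  have HS3 := ((Hb.mul Hb).const_mul (1/2:ℝ)).sub ((Ha.mul Ha).const_mul (1/2:ℝ))
  have h1 : px (Sigma1 u) p = fderiv ℝ (Sigma1 u) p (1,0,0) := rfl
  rw [h1, e1, (show HasFDerivAt (fun q => pz u q * px u q - (1/2 * px u q) * (py u q * py u q)
      - (1/6) * (px u q * (px u q * px u q))) _ p from HS1).fderiv]
  have h2 : py (Sigma2 u) p = fderiv ℝ (Sigma2 u) p (0,1,0) := rfl
  rw [h2, e2, (show HasFDerivAt (fun q => -(pz u q * py u q) + (1/2 * py u q) * (px u q * px u q)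
      + (1/6) * (py u q * (py u q * py u q))) _ p from HS2).fderiv]
  have h3 : pz (Sigma3 u) p = fderiv ℝ (Sigma3 u) p (0,0,1) := rfl
  rw [h3, e3, (show HasFDerivAt (fun q => (1/2) * (py u q * py u q) - (1/2) * (px u q * px u q))
      _ p from HS3).fderiv]
  simp only [ContinuousLinearMap.sub_apply, ContinuousLinearMap.add_apply,
    ContinuousLinearMap.neg_apply, ContinuousLinearMap.smul_apply, smul_eq_mul,
    ContinuousLinearMap.coe_smul', Pi.smul_apply, Pi.mul_apply]
  have cxy : fderiv ℝ (py u) p (1,0,0) = fderiv ℝ (px u) p (0,1,0) :=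
    pd_comm u hu p (0,1,0) (1,0,0)
  have cxz : fderiv ℝ (pz u) p (1,0,0) = fderiv ℝ (px u) p (0,0,1) :=
    pd_comm u hu p (0,0,1) (1,0,0)
  have cyz : fderiv ℝ (pz u) p (0,1,0) = fderiv ℝ (py u) p (0,0,1) :=
    pd_comm u hu p (0,0,1) (0,1,0)
  have hpx : px (px u) p = fderiv ℝ (px u) p (1,0,0) := rfl
  have hpy : py (py u) p = fderiv ℝ (py u) p (0,1,0) := rfl
  rw [hpx, hpy, cxy, cxz, cyz]
  ring
end
end

section
/- Let u_n → u weakly in some L^r space in the sense that all the following weak limits exist: (∂x u_n)^k(∂y u_n)^l ⇀ U_{kl} for 0 ≤ k + l ≤ 4. If U₄ + 2U₂₂ + V₄ − 2U₁U₃ − 2U₁U₁₂ − 2V₁U₂₁ − 2V₁V₃ + (U₂ + V₂)² = 0 and the weak limit of ((∂x u_n)² − ∂x u_n U₁ + (∂y u_n)² − ∂y u_n V₁)² is nonpositive (so zero), then U₂ − U₁² + V₂ − V₁² = 0; combined with U₂ ≥ U₁² and V₂ ≥ V₁², this forces U₂ = U₁² and V₂ = V₁², hence ∇⊥u_n → ∇⊥u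 strongly in L². -/
open MeasureTheory

set_option maxHeartbeats 1600000 in
/-- Young-measure (pointwise) version of the div-curl compactness step: if the moments of a
probability measure ν (representing the weak limits of powers of ∂x uₙ, ∂y uₙ) satisfy the
div-curl identity U₄ + 2U₂₂ + V₄ − 2U₁U₃ − 2U₁U₁₂ − 2V₁U₂₁ − 2V₁V₃ + (U₂ + V₂)² = 0 and the
limit of ((∂x uₙ)² − ∂x uₙ U₁ + (∂y uₙ)² − ∂y uₙ V₁)², i.e. ∫(s² + t² − sU₁ − tV₁)²dν, is
nonpositive, then U₂ − U₁² + V₂ − V₁² = 0; combined with U₂ ≥ U₁², V₂ ≥ V₁² this forces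
U₂ = U₁² and V₂ = V₁² (strong L² convergence of ∇⊥uₙ). -/
theorem divcurl_moment_rigidity (ν : Measure (ℝ × ℝ)) [IsProbabilityMeasure ν]
    (U₁ V₁ U₂ V₂ U₃ V₃ U₄ V₄ U₁₁ U₂₁ U₁₂ U₂₂ : ℝ)
    (hU₁ : U₁ = ∫ p, p.1 ∂ν) (hV₁ : V₁ = ∫ p, p.2 ∂ν)
    (hU₂ : U₂ = ∫ p, p.1^2 ∂ν) (hV₂ : V₂ = ∫ p, p.2^2 ∂ν)
    (hU₃ : U₃ = ∫ p, p.1^3 ∂ν) (hV₃ : V₃ = ∫ p, p.2^3 ∂ν)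
    (hU₄ : U₄ = ∫ p, p.1^4 ∂ν) (hV₄ : V₄ = ∫ p, p.2^4 ∂ν)
    (hU₁₁ : U₁₁ = ∫ p, p.1 * p.2 ∂ν) (hU₂₁ : U₂₁ = ∫ p, p.1^2 * p.2 ∂ν)
    (hU₁₂ : U₁₂ = ∫ p, p.1 * p.2^2 ∂ν) (hU₂₂ : U₂₂ = ∫ p, p.1^2 * p.2^2 ∂ν)
    (hint : ∀ k l : ℕ, k + l ≤ 4 → Integrable (fun p : ℝ × ℝ => p.1^k * p.2^l) ν)
    (hident : U₄ + 2*U₂₂ + V₄ - 2*U₁*U₃ - 2*U₁*U₁₂ - 2*V₁*U₂₁ - 2*V₁*V₃ + (U₂ + V₂)^2 = 0)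
    (hsq : (∫ p, (p.1^2 - p.1*U₁ + p.2^2 - p.2*V₁)^2 ∂ν) ≤ 0)
    (hU : U₂ ≥ U₁^2) (hV : V₂ ≥ V₁^2) :
    U₂ - U₁^2 + V₂ - V₁^2 = 0 ∧ U₂ = U₁^2 ∧ V₂ = V₁^2 := by

  -- shorthand integrable monomials
  have h10 : Integrable (fun p : ℝ × ℝ => p.1) ν := by simpa using hint 1 0 (by norm_num)
  have h01 : Integrable (fun p : ℝ × ℝ => p.2) ν := by simpa using hint 0 1 (by norm_num)
  have h20 : Integrable (fun p : ℝ × ℝ => p.1^2) ν := by simpa using hint 2 0 (by norm_num)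
  have h02 : Integrable (fun p : ℝ × ℝ => p.2^2) ν := by simpa using hint 0 2 (by norm_num)
  have h30 : Integrable (fun p : ℝ × ℝ => p.1^3) ν := by simpa using hint 3 0 (by norm_num)
  have h03 : Integrable (fun p : ℝ × ℝ => p.2^3) ν := by simpa using hint 0 3 (by norm_num)
  have h40 : Integrable (fun p : ℝ × ℝ => p.1^4) ν := by simpa using hint 4 0 (by norm_num)
  have h04 : Integrable (fun p : ℝ × ℝ => p.2^4) ν := by simpa using hint 0 4 (by norm_num)
  have h11 : Integrable (fun p : ℝ × ℝ => p.1 * p.2) ν := by simpa using hint 1 1 (by norm_num)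
  have h21 : Integrable (fun p : ℝ × ℝ => p.1^2 * p.2) ν := by simpa using hint 2 1 (by norm_num)
  have h12 : Integrable (fun p : ℝ × ℝ => p.1 * p.2^2) ν := by simpa using hint 1 2 (by norm_num)
  have h22 : Integrable (fun p : ℝ × ℝ => p.1^2 * p.2^2) ν := by simpa using hint 2 2 (by norm_num)
  set g : ℝ × ℝ → ℝ := fun p => p.1^2 - p.1*U₁ + p.2^2 - p.2*V₁ with hg_def
  have hg : Integrable g ν :=
    ((h20.sub (h10.mul_const U₁)).add h02).sub (h01.mul_const V₁)
  have hg2 : Integrable (fun p => (g p)^2) ν := by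
    have e : (fun p : ℝ × ℝ => (g p)^2)
        = fun p => p.1^4 + p.1^2 * (U₁^2) + p.2^4 + p.2^2 * (V₁^2)
          - p.1^3 * (2*U₁) + (p.1^2 * p.2^2) * 2 - (p.1^2 * p.2) * (2*V₁)
          - (p.1 * p.2^2) * (2*U₁) + (p.1 * p.2) * (2*(U₁*V₁)) - p.2^3 * (2*V₁) := by
      funext p; simp only [hg_def]; ring
    rw [e]
    exact (((((((((h40.add (h20.mul_const _)).add h04).add (h02.mul_const _)).sub
      (h30.mul_const _)).add (h22.mul_const _)).sub (h21.mul_const _)).sub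
      (h12.mul_const _)).add (h11.mul_const _)).sub (h03.mul_const _))
  set m : ℝ := U₂ - U₁^2 + V₂ - V₁^2 with hm_def
  have hA : Integrable (fun p : ℝ × ℝ => p.1^2 - p.1*U₁) ν := h20.sub (h10.mul_const U₁)
  have hB : Integrable (fun p : ℝ × ℝ => p.1^2 - p.1*U₁ + p.2^2) ν := hA.add h02
  have hC : Integrable (fun p : ℝ × ℝ => p.1*U₁) ν := h10.mul_const U₁
  have hD : Integrable (fun p : ℝ × ℝ => p.2*V₁) ν := h01.mul_const V₁
  have hgint : ∫ p, g p ∂ν = m := by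
    simp only [hg_def]
    rw [integral_sub hB hD, integral_add hA h02, integral_sub h20 hC,
        integral_mul_const U₁ (fun p : ℝ × ℝ => p.1), integral_mul_const V₁ (fun p : ℝ × ℝ => p.2)]
    rw [hm_def, hU₂, hV₂, hU₁, hV₁]; ring
  have hsq' : ∫ p, (g p)^2 ∂ν ≤ 0 := hsq
  have key : (0:ℝ) ≤ ∫ p, (g p - m)^2 ∂ν := integral_nonneg fun p => sq_nonneg _
  have expand : ∫ p, (g p - m)^2 ∂ν
      = (∫ p, (g p)^2 ∂ν) - 2*m*(∫ p, g p ∂ν) + m^2 := by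
    have e : (fun p => (g p - m)^2) = fun p => (g p)^2 - (2*m) * g p + m^2 := by
      funext p; ring
    have hE : Integrable (fun p => (2*m) * g p) ν := hg.const_mul (2*m)
    have hF : Integrable (fun p => (g p)^2 - (2*m) * g p) ν := hg2.sub hE
    rw [e, integral_add hF (integrable_const _), integral_sub hg2 hE,
        integral_const_mul (2*m) g, integral_const]
    simp
  have hm0 : m = 0 := by
    rw [expand, hgint] at key
    nlinarith [sq_nonneg m]
  refine ⟨hm0, ?_, ?_⟩ <;> nlinarith [hm0, hU, hV]
end

section
/- For a probability measure ν on ℝ² with finite fourth moments, let U_{kl} = ∫ s^k t^l dν(s,t). If U₄ + 2U₂₂ + V₄ − 2U₁U₃ − 2U₁U₁₂ − 2V₁U₂₁ − 2V₁V₃ + (U₂ + V₂)² = 0 (where V₄ = ∫ t⁴ dν, etc.), then ν is a Dirac mass: ν = δ_{(U₁, V₁)}. -/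
open MeasureTheory

/-- If a probability measure ν on ℝ² with finite fourth moments satisfies the div-curl moment
identity U₄ + 2U₂₂ + V₄ − 2U₁U₃ − 2U₁U₁₂ − 2V₁U₂₁ − 2V₁V₃ + (U₂ + V₂)² = 0, then ν is the
Dirac mass at (U₁, V₁). -/
theorem divcurl_moment_dirac (ν : Measure (ℝ × ℝ)) [IsProbabilityMeasure ν]
    (hint : ∀ k l : ℕ, k + l ≤ 4 → Integrable (fun p : ℝ × ℝ => p.1^k * p.2^l) ν)
    (hident : (∫ p, p.1^4 ∂ν) + 2 * (∫ p, p.1^2 * p.2^2 ∂ν) + (∫ p, p.2^4 ∂ν)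
        - 2 * (∫ p, p.1 ∂ν) * (∫ p, p.1^3 ∂ν)
        - 2 * (∫ p, p.1 ∂ν) * (∫ p, p.1 * p.2^2 ∂ν)
        - 2 * (∫ p, p.2 ∂ν) * (∫ p, p.1^2 * p.2 ∂ν)
        - 2 * (∫ p, p.2 ∂ν) * (∫ p, p.2^3 ∂ν)
        + ((∫ p, p.1^2 ∂ν) + (∫ p, p.2^2 ∂ν))^2 = 0) :
    ν = Measure.dirac ((∫ p, p.1 ∂ν, ∫ p, p.2 ∂ν) : ℝ × ℝ) := by
  have i10 : Integrable (fun p : ℝ × ℝ => p.1) ν := by simpa using hint 1 0 (by norm_num)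
  have i01 : Integrable (fun p : ℝ × ℝ => p.2) ν := by simpa using hint 0 1 (by norm_num)
  have i20 : Integrable (fun p : ℝ × ℝ => p.1^2) ν := by simpa using hint 2 0 (by norm_num)
  have i02 : Integrable (fun p : ℝ × ℝ => p.2^2) ν := by simpa using hint 0 2 (by norm_num)
  have i11 : Integrable (fun p : ℝ × ℝ => p.1*p.2) ν := by simpa using hint 1 1 (by norm_num)
  have i30 : Integrable (fun p : ℝ × ℝ => p.1^3) ν := by simpa using hint 3 0 (by norm_num)
  have i03 : Integrable (fun p : ℝ × ℝ => p.2^3) ν := by simpa using hint 0 3 (by norm_num)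
  have i21 : Integrable (fun p : ℝ × ℝ => p.1^2*p.2) ν := by simpa using hint 2 1 (by norm_num)
  have i12 : Integrable (fun p : ℝ × ℝ => p.1*p.2^2) ν := by simpa using hint 1 2 (by norm_num)
  have i40 : Integrable (fun p : ℝ × ℝ => p.1^4) ν := by simpa using hint 4 0 (by norm_num)
  have i04 : Integrable (fun p : ℝ × ℝ => p.2^4) ν := by simpa using hint 0 4 (by norm_num)
  have i22 : Integrable (fun p : ℝ × ℝ => p.1^2*p.2^2) ν := by simpa using hint 2 2 (by norm_num)
  set u1 := ∫ p, p.1 ∂ν with hu1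
  set v1 := ∫ p, p.2 ∂ν with hv1
  set u2 := ∫ p, p.1^2 ∂ν with hu2
  set v2 := ∫ p, p.2^2 ∂ν with hv2
  set u3 := ∫ p, p.1^3 ∂ν with hu3
  set v3 := ∫ p, p.2^3 ∂ν with hv3
  set u11 := ∫ p, p.1*p.2 ∂ν with hu11
  set u21 := ∫ p, p.1^2 * p.2 ∂ν with hu21
  set u12 := ∫ p, p.1 * p.2^2 ∂ν with hu12
  set u4 := ∫ p, p.1^4 ∂ν with hu4
  set v4 := ∫ p, p.2^4 ∂ν with hv4
  set u22 := ∫ p, p.1^2 * p.2^2 ∂ν with hu22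
  -- second moments minus square of first moments
  have hA : ∫ p, (p.1 - u1)^2 ∂ν = u2 - u1^2 := by
    have e : (fun p : ℝ × ℝ => (p.1 - u1)^2)
        = fun p : ℝ × ℝ => p.1^2 - (2*u1)*p.1 + u1^2 := funext fun p => by ring
    have isub : Integrable (fun p : ℝ × ℝ => p.1^2 - (2*u1)*p.1) ν :=
      i20.sub (i10.const_mul _)
    rw [e, integral_add isub (integrable_const _),
      integral_sub i20 (i10.const_mul _), integral_const_mul, integral_const]
    rw [← hu2, ← hu1]
    simp
    ring
  have hB : ∫ p, (p.2 - v1)^2 ∂ν = v2 - v1^2 := by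
    have e : (fun p : ℝ × ℝ => (p.2 - v1)^2)
        = fun p : ℝ × ℝ => p.2^2 - (2*v1)*p.2 + v1^2 := funext fun p => by ring
    have isub : Integrable (fun p : ℝ × ℝ => p.2^2 - (2*v1)*p.2) ν :=
      i02.sub (i01.const_mul _)
    rw [e, integral_add isub (integrable_const _),
      integral_sub i02 (i01.const_mul _), integral_const_mul, integral_const]
    rw [← hv2, ← hv1]
    simp
    ring
  -- the big square
  have ib1 : Integrable (fun p : ℝ × ℝ => p.1^4 + p.2^4) ν := i40.add i04
  have ib2 : Integrable (fun p : ℝ × ℝ => p.1^4 + p.2^4 + 2*(p.1^2*p.2^2)) ν :=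
    ib1.add (i22.const_mul 2)
  have ib3 : Integrable (fun p : ℝ × ℝ => p.1^4 + p.2^4 + 2*(p.1^2*p.2^2)
      - (2*u1)*p.1^3) ν := ib2.sub (i30.const_mul (2*u1))
  have ib4 : Integrable (fun p : ℝ × ℝ => p.1^4 + p.2^4 + 2*(p.1^2*p.2^2)
      - (2*u1)*p.1^3 - (2*v1)*(p.1^2*p.2)) ν := ib3.sub (i21.const_mul (2*v1))
  have ib5 : Integrable (fun p : ℝ × ℝ => p.1^4 + p.2^4 + 2*(p.1^2*p.2^2)
      - (2*u1)*p.1^3 - (2*v1)*(p.1^2*p.2) - (2*u1)*(p.1*p.2^2)) ν :=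
    ib4.sub (i12.const_mul (2*u1))
  have ib6 : Integrable (fun p : ℝ × ℝ => p.1^4 + p.2^4 + 2*(p.1^2*p.2^2)
      - (2*u1)*p.1^3 - (2*v1)*(p.1^2*p.2) - (2*u1)*(p.1*p.2^2) - (2*v1)*p.2^3) ν :=
    ib5.sub (i03.const_mul (2*v1))
  have ib7 : Integrable (fun p : ℝ × ℝ => p.1^4 + p.2^4 + 2*(p.1^2*p.2^2)
      - (2*u1)*p.1^3 - (2*v1)*(p.1^2*p.2) - (2*u1)*(p.1*p.2^2) - (2*v1)*p.2^3
      + (u1^2)*p.1^2) ν := ib6.add (i20.const_mul (u1^2))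
  have ib8 : Integrable (fun p : ℝ × ℝ => p.1^4 + p.2^4 + 2*(p.1^2*p.2^2)
      - (2*u1)*p.1^3 - (2*v1)*(p.1^2*p.2) - (2*u1)*(p.1*p.2^2) - (2*v1)*p.2^3
      + (u1^2)*p.1^2 + (2*u1*v1)*(p.1*p.2)) ν := ib7.add (i11.const_mul (2*u1*v1))
  have hF : ∫ p, (p.1^2 + p.2^2 - p.1*u1 - p.2*v1)^2 ∂ν
      = u4 + v4 + 2*u22 - (2*u1)*u3 - (2*v1)*u21 - (2*u1)*u12 - (2*v1)*v3
        + u1^2*u2 + (2*u1*v1)*u11 + v1^2*v2 := by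
    have e : (fun p : ℝ × ℝ => (p.1^2 + p.2^2 - p.1*u1 - p.2*v1)^2)
        = fun p : ℝ × ℝ => p.1^4 + p.2^4 + 2*(p.1^2*p.2^2) - (2*u1)*p.1^3
            - (2*v1)*(p.1^2*p.2) - (2*u1)*(p.1*p.2^2) - (2*v1)*p.2^3
            + (u1^2)*p.1^2 + (2*u1*v1)*(p.1*p.2) + (v1^2)*p.2^2 :=
      funext fun p => by ring
    rw [e, integral_add ib8 (i02.const_mul _), integral_add ib7 (i11.const_mul _),
        integral_add ib6 (i20.const_mul _), integral_sub ib5 (i03.const_mul _),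
        integral_sub ib4 (i12.const_mul _), integral_sub ib3 (i21.const_mul _),
        integral_sub ib2 (i30.const_mul _), integral_add ib1 (i22.const_mul _),
        integral_add i40 i04, integral_const_mul, integral_const_mul, integral_const_mul,
        integral_const_mul, integral_const_mul, integral_const_mul, integral_const_mul,
        integral_const_mul]
  have igb : Integrable (fun p : ℝ × ℝ => (v1^2)*p.1^2 - (2*u1*v1)*(p.1*p.2)) ν :=
    (i20.const_mul (v1^2)).sub (i11.const_mul (2*u1*v1))
  have hG : ∫ p, (p.1*v1 - p.2*u1)^2 ∂ν = v1^2*u2 - (2*u1*v1)*u11 + u1^2*v2 := by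
    have e : (fun p : ℝ × ℝ => (p.1*v1 - p.2*u1)^2)
        = fun p : ℝ × ℝ => (v1^2)*p.1^2 - (2*u1*v1)*(p.1*p.2) + (u1^2)*p.2^2 :=
      funext fun p => by ring
    rw [e, integral_add igb (i02.const_mul _),
        integral_sub (i20.const_mul _) (i11.const_mul _),
        integral_const_mul, integral_const_mul, integral_const_mul]
  have hFnn : 0 ≤ ∫ p, (p.1^2 + p.2^2 - p.1*u1 - p.2*v1)^2 ∂ν :=
    integral_nonneg fun p => sq_nonneg _
  have hGnn : 0 ≤ ∫ p, (p.1*v1 - p.2*u1)^2 ∂ν := integral_nonneg fun p => sq_nonneg _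
  have hu2nn : 0 ≤ u2 := by rw [hu2]; exact integral_nonneg fun p => sq_nonneg _
  have hv2nn : 0 ≤ v2 := by rw [hv2]; exact integral_nonneg fun p => sq_nonneg _
  have hAnn : 0 ≤ u2 - u1^2 := by
    rw [← hA]; exact integral_nonneg fun p => sq_nonneg _
  have hBnn : 0 ≤ v2 - v1^2 := by
    rw [← hB]; exact integral_nonneg fun p => sq_nonneg _
  clear_value u1 v1 u2 v2 u3 v3 u11 u21 u12 u4 v4 u22
  have key : (∫ p, (p.1^2 + p.2^2 - p.1*u1 - p.2*v1)^2 ∂ν)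
      + (∫ p, (p.1*v1 - p.2*u1)^2 ∂ν)
      + (u2+v2)*((u2-u1^2)+(v2-v1^2)) = 0 := by
    rw [hF, hG]; linear_combination hident
  have hc0 : (u2+v2)*((u2-u1^2)+(v2-v1^2)) = 0 := by
    have h1 : 0 ≤ (u2+v2)*((u2-u1^2)+(v2-v1^2)) :=
      mul_nonneg (by linarith) (by linarith)
    linarith
  have hsum0 : (u2-u1^2)+(v2-v1^2) = 0 := by
    by_contra h
    have hpos : 0 < (u2-u1^2)+(v2-v1^2) :=
      lt_of_le_of_ne (by linarith) (Ne.symm h)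
    have hcpos : 0 < u2+v2 := by
      have := sq_nonneg u1
      have := sq_nonneg v1
      linarith
    exact absurd hc0 (ne_of_gt (mul_pos hcpos hpos))
  have ha0 : u2 - u1^2 = 0 := by linarith
  have hb0 : v2 - v1^2 = 0 := by linarith
  have iA : Integrable (fun p : ℝ × ℝ => (p.1 - u1)^2) ν := by
    have h : Integrable (fun p : ℝ × ℝ => p.1^2 - (2*u1)*p.1 + u1^2) ν :=
      (i20.sub (i10.const_mul _)).add (integrable_const _)
    exact h.congr (ae_of_all _ fun p => by ring)
  have iB : Integrable (fun p : ℝ × ℝ => (p.2 - v1)^2) ν := by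
    have h : Integrable (fun p : ℝ × ℝ => p.2^2 - (2*v1)*p.2 + v1^2) ν :=
      (i02.sub (i01.const_mul _)).add (integrable_const _)
    exact h.congr (ae_of_all _ fun p => by ring)
  have h1 : ∀ᵐ p ∂ν, p.1 = u1 := by
    have h := (integral_eq_zero_iff_of_nonneg (fun p => sq_nonneg _) iA).1
      (by rw [hA, ha0])
    filter_upwards [h] with p hp
    have h2 : (p.1 - u1)^2 = 0 := hp
    have h3 : p.1 - u1 = 0 := by
      exact pow_eq_zero_iff (two_ne_zero).symm.symm |>.1 h2
    linarith
  have h2 : ∀ᵐ p ∂ν, p.2 = v1 := by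
    have h := (integral_eq_zero_iff_of_nonneg (fun p => sq_nonneg _) iB).1
      (by rw [hB, hb0])
    filter_upwards [h] with p hp
    have h2 : (p.2 - v1)^2 = 0 := hp
    have h3 : p.2 - v1 = 0 := by
      exact pow_eq_zero_iff (two_ne_zero).symm.symm |>.1 h2
    linarith
  have hae : ∀ᵐ p ∂ν, p = ((u1, v1) : ℝ × ℝ) := by
    filter_upwards [h1, h2] with p hp1 hp2
    exact Prod.ext hp1 hp2
  have hmap : ν = ν.map (fun _ : ℝ × ℝ => ((u1, v1) : ℝ × ℝ)) := by
    conv_lhs => rw [← Measure.map_id (μ := ν)]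
    exact Measure.map_congr hae
  rw [hmap, Measure.map_const]
  simp
end

section
/- For a C³ function u of two variables, the identity 3|∇⊥u|²Δ⊥u = −4(∂x²u ∂y²u − (∂xy u)²)u + ∇⊥·(∇⊥u |∇⊥u|²) + 2∇⊥·(u Δ⊥u ∇⊥u − (1/2) u ∇⊥|∇⊥u|²) holds pointwise. -/
noncomputable section
def qx (u : ℝ × ℝ → ℝ) (p : ℝ × ℝ) : ℝ := fderiv ℝ u p (1, 0)
def qy (u : ℝ × ℝ → ℝ) (p : ℝ × ℝ) : ℝ := fderiv ℝ u p (0, 1)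

section helpers
variable {f g : ℝ × ℝ → ℝ} {p v : ℝ × ℝ}

lemma qd_mul (hf : DifferentiableAt ℝ f p) (hg : DifferentiableAt ℝ g p) :
    fderiv ℝ (fun q => f q * g q) p v = f p * fderiv ℝ g p v + g p * fderiv ℝ f p v := by
  rw [fderiv_fun_mul hf hg]; simp

lemma qd_add (hf : DifferentiableAt ℝ f p) (hg : DifferentiableAt ℝ g p) :
    fderiv ℝ (fun q => f q + g q) p v = fderiv ℝ f p v + fderiv ℝ g p v := by
  rw [fderiv_fun_add hf hg]; simp

lemma qd_sub (hf : DifferentiableAt ℝ f p) (hg : DifferentiableAt ℝ g p) :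
    fderiv ℝ (fun q => f q - g q) p v = fderiv ℝ f p v - fderiv ℝ g p v := by
  rw [fderiv_fun_sub hf hg]; simp

lemma qd_sq (hf : DifferentiableAt ℝ f p) :
    fderiv ℝ (fun q => f q ^ 2) p v = 2 * f p * fderiv ℝ f p v := by
  have h : (fun q => f q ^ 2) = fun q => f q * f q := by ext q; ring
  rw [h, qd_mul hf hf]; ring

lemma qd_const_mul (c : ℝ) (hf : DifferentiableAt ℝ f p) :
    fderiv ℝ (fun q => c * f q) p v = c * fderiv ℝ f p v := by
  rw [fderiv_const_mul hf]; simp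
end helpers

lemma contDiff_qv {n : ℕ} {u : ℝ × ℝ → ℝ} (hu : ContDiff ℝ (n+1 : ℕ) u) (v : ℝ × ℝ) :
    ContDiff ℝ (n : ℕ) (fun p => fderiv ℝ u p v) :=
  (ContinuousLinearMap.apply ℝ ℝ v).contDiff.comp (hu.fderiv_right (by exact_mod_cast le_rfl))

lemma qv_eval {u : ℝ × ℝ → ℝ} (hu : ContDiff ℝ 2 u) (p v w : ℝ × ℝ) :
    fderiv ℝ (fun q => fderiv ℝ u q v) p w = fderiv ℝ (fderiv ℝ u) p w v := by
  have hdf : DifferentiableAt ℝ (fderiv ℝ u) p :=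
    ((hu.fderiv_right (m := 1) (by norm_num)).differentiable (by norm_num)).differentiableAt
  have : (fun q => fderiv ℝ u q v) = (ContinuousLinearMap.apply ℝ ℝ v) ∘ (fderiv ℝ u) := rfl
  rw [this, fderiv_comp p (ContinuousLinearMap.apply ℝ ℝ v).differentiableAt hdf]
  simp

lemma symm2 {u : ℝ × ℝ → ℝ} (hu : ContDiff ℝ 2 u) (p : ℝ × ℝ) :
    qx (qy u) p = qy (qx u) p := by
  have hs := hu.contDiffAt (x := p) |>.isSymmSndFDerivAt (by norm_num)
  unfold qx qy
  rw [qv_eval hu p _ _, qv_eval hu p _ _, hs]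

/-- 3|∇⊥u|²Δ⊥u = −4K̄u + ∇⊥·(∇⊥u|∇⊥u|²) + 2∇⊥·(uΔ⊥u∇⊥u − ½u∇⊥|∇⊥u|²) for C³ `u`. -/
theorem cubic_identity (u : ℝ × ℝ → ℝ) (hu : ContDiff ℝ 3 u) (p : ℝ × ℝ) :
    3 * ((qx u p)^2 + (qy u p)^2) * (qx (qx u) p + qy (qy u) p) =
      -4 * (qx (qx u) p * qy (qy u) p - (qx (qy u) p)^2) * u p +
      (qx (fun q => qx u q * ((qx u q)^2 + (qy u q)^2)) p +
        qy (fun q => qy u q * ((qx u q)^2 + (qy u q)^2)) p) +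
      2 * (qx (fun q => u q * (qx (qx u) q + qy (qy u) q) * qx u q
              - (1/2) * u q * qx (fun r => (qx u r)^2 + (qy u r)^2) q) p +
           qy (fun q => u q * (qx (qx u) q + qy (qy u) q) * qy u q
              - (1/2) * u q * qy (fun r => (qx u r)^2 + (qy u r)^2) q) p) := by
  -- ContDiff facts
  have hu2 : ContDiff ℝ 2 u := hu.of_le (by norm_num)
  have hux : ContDiff ℝ 2 (qx u) := contDiff_qv (n := 2) (by exact_mod_cast hu) (1,0)
  have huy : ContDiff ℝ 2 (qy u) := contDiff_qv (n := 2) (by exact_mod_cast hu) (0,1)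
  have huxx : ContDiff ℝ 1 (qx (qx u)) := contDiff_qv (n := 1) hux (1,0)
  have huxy : ContDiff ℝ 1 (qx (qy u)) := contDiff_qv (n := 1) huy (1,0)
  have huyx : ContDiff ℝ 1 (qy (qx u)) := contDiff_qv (n := 1) hux (0,1)
  have huyy : ContDiff ℝ 1 (qy (qy u)) := contDiff_qv (n := 1) huy (0,1)
  -- DifferentiableAt facts (everywhere)
  have du : ∀ q, DifferentiableAt ℝ u q := fun q => (hu.differentiable (by norm_num)).differentiableAt
  have da : ∀ q, DifferentiableAt ℝ (qx u) q := fun q => (hux.differentiable (by norm_num)).differentiableAt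
  have db : ∀ q, DifferentiableAt ℝ (qy u) q := fun q => (huy.differentiable (by norm_num)).differentiableAt
  have dc : ∀ q, DifferentiableAt ℝ (qx (qx u)) q := fun q => (huxx.differentiable (by norm_num)).differentiableAt
  have dd : ∀ q, DifferentiableAt ℝ (qx (qy u)) q := fun q => (huxy.differentiable (by norm_num)).differentiableAt
  have dd' : ∀ q, DifferentiableAt ℝ (qy (qx u)) q := fun q => (huyx.differentiable (by norm_num)).differentiableAt
  have de : ∀ q, DifferentiableAt ℝ (qy (qy u)) q := fun q => (huyy.differentiable (by norm_num)).differentiableAt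
  -- symmetry
  have hsym : ∀ q, qx (qy u) q = qy (qx u) q := symm2 hu2
  have hsymf : qx (qy u) = qy (qx u) := funext hsym
  -- inner gradient-square derivative rewrites
  have e1 : ∀ q, qx (fun r => (qx u r)^2 + (qy u r)^2) q
      = 2 * qx u q * qx (qx u) q + 2 * qy u q * qx (qy u) q := by
    intro q
    show fderiv ℝ _ q _ = _
    rw [qd_add ((da q).fun_pow 2) ((db q).fun_pow 2), qd_sq (da q), qd_sq (db q)]
    rfl
  have e2 : ∀ q, qy (fun r => (qx u r)^2 + (qy u r)^2) q
      = 2 * qx u q * qy (qx u) q + 2 * qy u q * qy (qy u) q := by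
    intro q
    show fderiv ℝ _ q _ = _
    rw [qd_add ((da q).fun_pow 2) ((db q).fun_pow 2), qd_sq (da q), qd_sq (db q)]
    rfl
  simp only [e1, e2]
  -- divergence term 2
  have t2x : qx (fun q => qx u q * ((qx u q)^2 + (qy u q)^2)) p
      = qx (qx u) p * ((qx u p)^2 + (qy u p)^2)
        + qx u p * (2 * qx u p * qx (qx u) p + 2 * qy u p * qx (qy u) p) := by
    show fderiv ℝ _ p _ = _
    rw [qd_mul (da p) (((da p).fun_pow 2).fun_add ((db p).fun_pow 2)),
        qd_add ((da p).fun_pow 2) ((db p).fun_pow 2), qd_sq (da p), qd_sq (db p)]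
    unfold qx qy; ring
  have t2y : qy (fun q => qy u q * ((qx u q)^2 + (qy u q)^2)) p
      = qy (qy u) p * ((qx u p)^2 + (qy u p)^2)
        + qy u p * (2 * qx u p * qy (qx u) p + 2 * qy u p * qy (qy u) p) := by
    show fderiv ℝ _ p _ = _
    rw [qd_mul (db p) (((da p).fun_pow 2).fun_add ((db p).fun_pow 2)),
        qd_add ((da p).fun_pow 2) ((db p).fun_pow 2), qd_sq (da p), qd_sq (db p)]
    unfold qx qy; ring

  -- divergence term 3, x-component
  have t3x : qx (fun q => u q * (qx (qx u) q + qy (qy u) q) * qx u q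
      - 1/2 * u q * (2 * qx u q * qx (qx u) q + 2 * qy u q * qx (qy u) q)) p
      = (u p * (qx (qx u) p + qy (qy u) p)) * qx (qx u) p
        + qx u p * (u p * (qx (qx (qx u)) p + qx (qy (qy u)) p)
            + (qx (qx u) p + qy (qy u) p) * qx u p)
        - (1/2 * u p * (2 * qx u p * qx (qx (qx u)) p + qx (qx u) p * (2 * qx (qx u) p)
              + (2 * qy u p * qx (qx (qy u)) p + qx (qy u) p * (2 * qx (qy u) p)))
           + (2 * qx u p * qx (qx u) p + 2 * qy u p * qx (qy u) p) * (1/2 * qx u p)) := by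
    show fderiv ℝ _ p _ = _
    rw [qd_sub (((du p).fun_mul ((dc p).fun_add (de p))).fun_mul (da p))
          (((du p).const_mul (1/2)).fun_mul
            ((((da p).const_mul 2).fun_mul (dc p)).fun_add (((db p).const_mul 2).fun_mul (dd p)))),
        qd_mul ((du p).fun_mul ((dc p).fun_add (de p))) (da p),
        qd_mul (du p) ((dc p).fun_add (de p)),
        qd_add (dc p) (de p),
        qd_mul ((du p).const_mul (1/2))
          ((((da p).const_mul 2).fun_mul (dc p)).fun_add (((db p).const_mul 2).fun_mul (dd p))),
        qd_const_mul (1/2) (du p),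
        qd_add (((da p).const_mul 2).fun_mul (dc p)) (((db p).const_mul 2).fun_mul (dd p)),
        qd_mul ((da p).const_mul 2) (dc p),
        qd_mul ((db p).const_mul 2) (dd p),
        qd_const_mul 2 (da p), qd_const_mul 2 (db p)]
    unfold qx qy; ring

  -- divergence term 3, y-component
  have t3y : qy (fun q => u q * (qx (qx u) q + qy (qy u) q) * qy u q
      - 1/2 * u q * (2 * qx u q * qy (qx u) q + 2 * qy u q * qy (qy u) q)) p
      = (u p * (qx (qx u) p + qy (qy u) p)) * qy (qy u) p
        + qy u p * (u p * (qy (qx (qx u)) p + qy (qy (qy u)) p)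
            + (qx (qx u) p + qy (qy u) p) * qy u p)
        - (1/2 * u p * (2 * qx u p * qy (qy (qx u)) p + qy (qx u) p * (2 * qy (qx u) p)
              + (2 * qy u p * qy (qy (qy u)) p + qy (qy u) p * (2 * qy (qy u) p)))
           + (2 * qx u p * qy (qx u) p + 2 * qy u p * qy (qy u) p) * (1/2 * qy u p)) := by
    show fderiv ℝ _ p _ = _
    rw [qd_sub (((du p).fun_mul ((dc p).fun_add (de p))).fun_mul (db p))
          (((du p).const_mul (1/2)).fun_mul
            ((((da p).const_mul 2).fun_mul (dd' p)).fun_add (((db p).const_mul 2).fun_mul (de p)))),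
        qd_mul ((du p).fun_mul ((dc p).fun_add (de p))) (db p),
        qd_mul (du p) ((dc p).fun_add (de p)),
        qd_add (dc p) (de p),
        qd_mul ((du p).const_mul (1/2))
          ((((da p).const_mul 2).fun_mul (dd' p)).fun_add (((db p).const_mul 2).fun_mul (de p))),
        qd_const_mul (1/2) (du p),
        qd_add (((da p).const_mul 2).fun_mul (dd' p)) (((db p).const_mul 2).fun_mul (de p)),
        qd_mul ((da p).const_mul 2) (dd' p),
        qd_mul ((db p).const_mul 2) (de p),
        qd_const_mul 2 (da p), qd_const_mul 2 (db p)]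
    unfold qx qy; ring

  -- third-order symmetry facts
  have huy2 : ContDiff ℝ 2 (qy u) := huy
  have hux2 : ContDiff ℝ 2 (qx u) := hux
  have s1 : qx (qy (qy u)) p = qy (qy (qx u)) p := by
    rw [symm2 huy2 p, hsymf]
  have s2 : qy (qx (qx u)) p = qx (qx (qy u)) p := by
    rw [← symm2 hux2 p, hsymf]
  rw [t2x, t2y, t3x, t3y, hsym p, s1, s2]
  ring
end
end
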